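/- Let w = e_k⋯e_1 be a primitive cycle in a directed graph G and λ ∈ 𝕋, and let S_{w,λ} be the cycle-type atomic CK family on H_w = ℂ^k ⊕ K_w with cycle basis ξ_1,…,ξ_k. Then the WOT-limit of (λ̄ S_w)^n as n → ∞ is the rank-one projection ξ_1 ξ_1*, and consequently the generated free semigroupoid algebra contains all matrix units ξ_j ξ_i* for 1 ≤ i, j ≤ k, i.e., contains B(ℂ^k) ⊕ 0. -/

import Mathlib

/-!
Indices start at `0`: `ξ (Sum.inl 0)` is the paper's `ξ₁` and `w = e_{k-1} ⋯ e_0`.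

`T = λ̄ S_w` is a contraction fixing `ξ₀`. On every other basis vector it either vanishes or
produces a multiple of a wandering vector `ξ_{(j,f,μ)}` of larger depth `|μ| + 1`: a wandering
vector has its path lengthened by `k`, and a cycle vector `ξ_j`, `j ≠ 0`, has to leave the cycle,
since following the cycle all the way round from `e_j` would make `j` a period of `e`, against
primitivity. By Bessel's inequality only finitely many basis vectors have a large inner product
with a given `y`, so `Tᵐ ξ_b → 0` weakly for `b ≠ 0`; as the `Tᵐ` are uniformly bounded and the
`ξ_b` are total, `Tᵐ → ξ₀ ξ₀*` in the weak operator topology. Finally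
`S_{e_{j-1} ⋯ e_0}` carries `ξ₀` to `ξ_j` and the contraction `λ̄ S_{e_{k-1} ⋯ e_i}` carries
`ξ_i` isometrically to `ξ₀`, so the corresponding products with `Tᵐ` converge to `ξ_j ξ_i*`.
-/

structure DirectedGraph where
  V : Type
  E : Type
  src : E → V
  rng : E → V

namespace DirectedGraph

/-- Two edges are composable (as in `e₂ e₁`, `e₂` after `e₁`) when `s(e₂) = r(e₁)`. -/
def Composable (G : DirectedGraph) (a b : G.E) : Prop := G.src a = G.rng b

/-- A list `[eₙ, …, e₁]` of edges is a path when consecutive edges are composable. -/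
def IsPathList (G : DirectedGraph) (μ : List G.E) : Prop := List.Chain' G.Composable μ

/-- The path `μ` has source `v` (vacuous for the empty path). -/
def SrcIs (G : DirectedGraph) (μ : List G.E) (v : G.V) : Prop :=
  ∀ e ∈ μ.getLast?, G.src e = v

/-- The path `μ`, regarded as a path with source `v`, has range `w`. -/
def RngIs (G : DirectedGraph) (v : G.V) (μ : List G.E) (w : G.V) : Prop :=
  match μ with
  | [] => v = w
  | e :: _ => G.rng e = w

/-- `μ` is a path with source `v`. -/
def IsPathAt (G : DirectedGraph) (v : G.V) (μ : List G.E) : Prop :=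
  G.IsPathList μ ∧ G.SrcIs μ v

/-- `μ` is a cycle at `v` : a path with source and range `v`. -/
def IsCycleAt (G : DirectedGraph) (v : G.V) (μ : List G.E) : Prop :=
  G.IsPathAt v μ ∧ G.RngIs v μ v

end DirectedGraph

/-- A Toeplitz–Cuntz–Krieger family for the directed graph `G` on the Hilbert space `H`:
pairwise orthogonal projections `Sv v`, partial isometries `Se e` with
`(Se e)* (Se e) = Sv (s e)`, and `∑_{e ∈ F} (Se e)(Se e)* ≤ Sv v` for finite `F ⊆ r⁻¹(v)`. -/
structure TCKFamily (G : DirectedGraph) (H : Type) [NormedAddCommGroup H]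
    [InnerProductSpace ℂ H] [CompleteSpace H] where
  Sv : G.V → H →L[ℂ] H
  Se : G.E → H →L[ℂ] H
  sv_sa : ∀ v, IsSelfAdjoint (Sv v)
  sv_idem : ∀ v, Sv v * Sv v = Sv v
  sv_orth : ∀ v w, v ≠ w → Sv v * Sv w = 0
  se_isom : ∀ e, ContinuousLinearMap.adjoint (Se e) * Se e = Sv (G.src e)
  tck_ineq : ∀ (v : G.V) (F : Finset G.E), (∀ e ∈ F, G.rng e = v) →
    ContinuousLinearMap.IsPositive
      (Sv v - ∑ e ∈ F, Se e * ContinuousLinearMap.adjoint (Se e))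

/-- The closure of a set of operators in the weak operator topology, described
via the basic WOT neighbourhoods. -/
def wotClosure {H : Type} [NormedAddCommGroup H] [InnerProductSpace ℂ H]
    (A : Set (H →L[ℂ] H)) : Set (H →L[ℂ] H) :=
  {T | ∀ (F : Finset (H × H)) (ε : ℝ), 0 < ε →
    ∃ X ∈ A, ∀ p ∈ F, ‖(@inner ℂ H _ ((T - X) p.1) p.2)‖ < ε}

/-- The index set for the orthonormal basis of the "wandering" part `K_w` of the
cycle-type representation `S_{w,λ}`: triples `(j, f, μ)` where `f ≠ e_j` is an edge
with `s(f) = s(e_j)` and `μ` is a path with source `r(f)`. -/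
def BranchIdx (G : DirectedGraph) {k : ℕ} (e : Fin k → G.E) : Type :=
  {t : Fin k × G.E × List G.E //
    G.src t.2.1 = G.src (e t.1) ∧ t.2.1 ≠ e t.1 ∧ G.IsPathAt (G.rng t.2.1) t.2.2}


open Filter Topology Fin.CommRing
open scoped InnerProductSpace

section WeakOperatorLimits

variable {𝕜 H ι : Type*} [RCLike 𝕜] [NormedAddCommGroup H] [InnerProductSpace 𝕜 H]

lemma Filter.comap_atTop_le_cofinite {α : Type*} (r : α → ℕ) : comap r atTop ≤ cofinite :=
  le_cofinite_iff_compl_singleton_mem.mpr fun b ↦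
    ⟨Set.Ioi (r b), Ioi_mem_atTop _, fun _ hx (hxb : _ = b) ↦ (hxb ▸ hx : r b < r b).false⟩

lemma Orthonormal.tendsto_inner_cofinite {ξ : ι → H} (hξ : Orthonormal 𝕜 ξ) (y : H) :
    Tendsto (fun b ↦ ⟪y, ξ b⟫_𝕜) cofinite (𝓝 0) := by
  have h := (hξ.inner_products_summable (x := y)).tendsto_cofinite_zero.sqrt
  simp only [Real.sqrt_sq (norm_nonneg _), Real.sqrt_zero] at h
  rw [tendsto_zero_iff_norm_tendsto_zero]
  simpa only [norm_inner_symm] using h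

lemma ContinuousLinearMap.norm_pow_le_one {A : H →L[𝕜] H} (hA : ‖A‖ ≤ 1) :
    ∀ m : ℕ, ‖A ^ m‖ ≤ 1
  | 0 => ContinuousLinearMap.norm_id_le
  | m + 1 => (norm_pow_le' A m.succ_pos).trans (pow_le_one₀ (norm_nonneg _) hA)

section Wandering

variable {A : H →L[𝕜] H} {ξ : ι → H} {P : Set ι} {r : ι → ℕ}

lemma pow_apply_eq_zero_or_smul_of_wandering
    (hstep : ∀ b ∈ P, A (ξ b) = 0 ∨ ∃ (c : 𝕜) (b' : ι), b' ∈ P ∧ r b < r b' ∧ A (ξ b) = c • ξ b')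
    {b : ι} (hb : b ∈ P) (m : ℕ) :
    (A ^ m) (ξ b) = 0 ∨ ∃ (c : 𝕜) (b' : ι), b' ∈ P ∧ m ≤ r b' ∧ (A ^ m) (ξ b) = c • ξ b' := by
  induction m with
  | zero => exact .inr ⟨1, b, hb, Nat.zero_le _, by simp⟩
  | succ m ih =>
    rw [pow_succ', mul_apply_eq_comp]
    obtain h0 | ⟨c, b', hb', hm, hv⟩ := ih
    · simp [h0]
    obtain h0 | ⟨c', b'', hb'', hr, hv'⟩ := hstep b' hb'
    · simp [hv, h0]
    · exact .inr ⟨c * c', b'', hb'', by omega, by rw [hv, map_smul, hv', smul_smul]⟩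

/-- Bessel's inequality leaves only finitely many `ξ b'` with `‖⟪y, ξ b'⟫‖ ≥ ε`, and the depth
`r` of the basis vector reached by `Aᵐ` eventually exceeds all of theirs. -/
lemma tendsto_inner_pow_apply_of_wandering (hA : ‖A‖ ≤ 1) (hξ : Orthonormal 𝕜 ξ)
    (hstep : ∀ b ∈ P, A (ξ b) = 0 ∨ ∃ (c : 𝕜) (b' : ι), b' ∈ P ∧ r b < r b' ∧ A (ξ b) = c • ξ b')
    {b : ι} (hb : b ∈ P) (y : H) :
    Tendsto (fun m ↦ ⟪y, (A ^ m) (ξ b)⟫_𝕜) atTop (𝓝 0) := by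
  have hsmall := (hξ.tendsto_inner_cofinite y).mono_left (comap_atTop_le_cofinite r)
  rw [Metric.tendsto_atTop]
  intro ε hε
  obtain ⟨N, -, hN⟩ := ((atTop_basis.comap r).tendsto_iff Metric.nhds_basis_ball).mp hsmall ε hε
  refine ⟨N, fun m hm ↦ ?_⟩
  obtain h0 | ⟨c, b', -, hb', hv⟩ := pow_apply_eq_zero_or_smul_of_wandering hstep hb m
  · simpa [h0] using hε
  have hc : ‖c‖ ≤ 1 := by
    simpa [hv, norm_smul, hξ.1 b, hξ.1 b'] using
      (A ^ m).le_of_opNorm_le (ContinuousLinearMap.norm_pow_le_one hA m) (ξ b)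
  have hy : ‖⟪y, ξ b'⟫_𝕜‖ < ε := by simpa using hN b' (show N ≤ r b' by omega)
  calc dist ⟪y, (A ^ m) (ξ b)⟫_𝕜 0 = ‖c‖ * ‖⟪y, ξ b'⟫_𝕜‖ := by
        rw [dist_zero_right, hv, inner_smul_right, norm_mul]
    _ < ε := lt_of_le_of_lt (mul_le_of_le_one_left (norm_nonneg _) hc) hy

end Wandering

lemma tendsto_apply_of_tendsto_on_total {𝕜 E F ι κ : Type*} [NontriviallyNormedField 𝕜]
    [NormedAddCommGroup E] [NormedSpace 𝕜 E] [NormedAddCommGroup F] [NormedSpace 𝕜 F]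
    {f : ι → E →L[𝕜] F} {C : ℝ} (hf : ∀ i, ‖f i‖ ≤ C) (g : E →L[𝕜] F) {l : Filter ι}
    {v : κ → E} (hv : (Submodule.span 𝕜 (Set.range v)).topologicalClosure = ⊤)
    (h : ∀ b, Tendsto (fun i ↦ f i (v b)) l (𝓝 (g (v b)))) (x : E) :
    Tendsto (fun i ↦ f i x) l (𝓝 (g x)) := by
  have hequi : Equicontinuous fun i ↦ ⇑(f i) :=
    ((NormedSpace.equicontinuous_TFAE f).out 5 1).mp (show ∃ C, ∀ i, ‖f i‖ ≤ C from ⟨C, hf⟩)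
  have hspan : (Submodule.span 𝕜 (Set.range v) : Set E) ⊆
      {x | Tendsto (fun i ↦ f i x) l (𝓝 (g x))} := by
    intro x hx
    induction hx using Submodule.span_induction with
    | mem _ hy => obtain ⟨b, rfl⟩ := hy; exact h b
    | zero => simpa using tendsto_const_nhds
    | add _ _ _ _ hy hz => simpa using hy.add hz
    | smul c _ _ hy => simpa using hy.const_smul c
  have hx : x ∈ closure (Submodule.span 𝕜 (Set.range v) : Set E) := by
    rw [← Submodule.topologicalClosure_coe, hv]
    trivial
  exact closure_minimal hspan (hequi.isClosed_setOfPred_tendsto g.continuous) hx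

lemma mem_wotClosure_of_tendsto {H ι : Type} [NormedAddCommGroup H] [InnerProductSpace ℂ H]
    {A : Set (H →L[ℂ] H)} {T : H →L[ℂ] H} {l : Filter ι} [l.NeBot] {X : ι → H →L[ℂ] H}
    (hX : ∀ i, X i ∈ A) (h : ∀ x y, Tendsto (fun i ↦ ⟪y, X i x⟫_ℂ) l (𝓝 ⟪y, T x⟫_ℂ)) :
    T ∈ wotClosure A := by
  intro F ε hε
  have hclose : ∀ p ∈ F, ∀ᶠ i in l, ‖⟪(T - X i) p.1, p.2⟫_ℂ‖ < ε := fun p _ ↦ by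
    filter_upwards [(h p.1 p.2).eventually (Metric.ball_mem_nhds _ hε)] with i hi
    rwa [← norm_inner_symm, sub_apply, inner_sub_right, ← dist_eq_norm, dist_comm]
  obtain ⟨i, hi⟩ := ((Finset.eventually_all F).mpr hclose).exists
  exact ⟨X i, hX i, hi⟩

variable [CompleteSpace H]

lemma inner_map_map_of_norm_map_eq {B : H →L[𝕜] H} (hB : ‖B‖ ≤ 1) {v : H}
    (hv : ‖B v‖ = ‖v‖) (x : H) : ⟪B v, B x⟫_𝕜 = ⟪v, x⟫_𝕜 := by
  have hfix : B.adjoint (B v) = v := by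
    have hle : ‖B.adjoint (B v)‖ ≤ ‖v‖ := by
      simpa [hv] using B.adjoint.le_of_opNorm_le
        (show ‖B.adjoint‖ ≤ 1 by rwa [LinearIsometryEquiv.norm_map]) (B v)
    have hre : RCLike.re ⟪B.adjoint (B v), v⟫_𝕜 = ‖v‖ ^ 2 := by
      rw [B.adjoint_inner_left, inner_self_eq_norm_sq, hv]
    have hsq : ‖B.adjoint (B v) - v‖ ^ 2 ≤ 0 := by
      rw [@norm_sub_sq 𝕜, hre]
      nlinarith [norm_nonneg (B.adjoint (B v))]
    exact sub_eq_zero.mp (norm_eq_zero.mp (pow_eq_zero_iff two_ne_zero |>.mp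
      (le_antisymm hsq (sq_nonneg _))))
  rw [← B.adjoint_inner_left, hfix]

lemma tendsto_inner_mul_pow_mul {T A B : H →L[𝕜] H} {z u v : H}
    (hT : ∀ x y, Tendsto (fun m : ℕ ↦ ⟪y, (T ^ m) x⟫_𝕜) atTop (𝓝 (⟪z, x⟫_𝕜 * ⟪y, z⟫_𝕜)))
    (hA : A z = u) (hB : ∀ x, ⟪z, B x⟫_𝕜 = ⟪v, x⟫_𝕜) (x y : H) :
    Tendsto (fun m : ℕ ↦ ⟪y, (A * T ^ m * B) x⟫_𝕜) atTop
      (𝓝 ⟪y, (innerSL 𝕜 v).smulRight u x⟫_𝕜) := by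
  simp only [mul_apply_eq_comp, ← A.adjoint_inner_left]
  convert hT (B x) (A.adjoint y) using 2
  rw [hB, A.adjoint_inner_left, hA, ContinuousLinearMap.smulRight_apply, innerSL_apply_apply,
    inner_smul_right]

end WeakOperatorLimits

lemma Fin.val_add_natCast_of_lt {k : ℕ} [NeZero k] {i : Fin k} {t : ℕ} (h : (i : ℕ) + t < k) :
    ((i + (t : Fin k) : Fin k) : ℕ) = i + t := by
  rw [Fin.val_add, Fin.val_natCast, Nat.add_mod_mod, Nat.mod_eq_of_lt h]

lemma Fin.periodic_ofNat_gcd {α : Type*} {k : ℕ} [NeZero k] {f : Fin k → α} {j : Fin k}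
    (h : Function.Periodic f j) : Function.Periodic f (Fin.ofNat k (Nat.gcd j k)) := by
  have hbezout : Fin.ofNat k (Nat.gcd j k) = (Nat.gcdA j k : Fin k) * j := by
    have := congrArg (fun z : ℤ ↦ (z : Fin k)) (Nat.gcd_eq_gcd_ab j k)
    push_cast [Fin.natCast_self] at this
    simpa [mul_comm] using this
  rw [hbezout]
  exact h.int_mul _

lemma Fin.eq_zero_of_periodic {α : Type*} {k : ℕ} [NeZero k] {f : Fin k → α}
    (hprim : ∀ p : ℕ, 0 < p → p < k → p ∣ k → ¬ Function.Periodic f (Fin.ofNat k p))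
    {j : Fin k} (h : Function.Periodic f j) : j = 0 := by
  by_contra hj
  have hj0 : 0 < (j : ℕ) := Nat.pos_of_ne_zero (Fin.val_ne_iff.mpr hj)
  exact hprim _ (Nat.gcd_pos_of_pos_left _ hj0)
    ((Nat.gcd_le_left _ hj0).trans_lt j.isLt) (Nat.gcd_dvd_right _ _) (Fin.periodic_ofNat_gcd h)

lemma DirectedGraph.IsPathAt.cons {G : DirectedGraph} {v : G.V} {μ : List G.E} {g : G.E}
    (hμ : G.IsPathAt v μ) (hg : G.RngIs v μ (G.src g)) : G.IsPathAt v (g :: μ) := by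
  obtain ⟨hchain, hsrc⟩ := hμ
  cases μ with
  | nil => exact ⟨List.isChain_singleton g, by simpa [DirectedGraph.SrcIs] using hg.symm⟩
  | cons a μ => exact ⟨.cons_cons hg.symm hchain, by simpa [DirectedGraph.SrcIs] using hsrc⟩

namespace BranchIdx

variable {G : DirectedGraph} {k : ℕ} {e : Fin k → G.E}

abbrev path (q : BranchIdx G e) : List G.E := q.1.2.2

def extend (q : BranchIdx G e) (g : G.E) (hg : G.RngIs (G.rng q.1.2.1) q.path (G.src g)) :
    BranchIdx G e :=
  ⟨(q.1.1, q.1.2.1, g :: q.path), q.2.1, q.2.2.1, q.2.2.2.cons hg⟩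

end BranchIdx

namespace TCKFamily

variable {G : DirectedGraph} {H : Type} [NormedAddCommGroup H] [InnerProductSpace ℂ H]
  [CompleteSpace H] (S : TCKFamily G H)

lemma norm_Sv_le (v : G.V) : ‖S.Sv v‖ ≤ 1 :=
  IsStarProjection.norm_le _ ⟨S.sv_idem v, S.sv_sa v⟩

lemma norm_Se_le (g : G.E) : ‖S.Se g‖ ≤ 1 := by
  have h : ‖S.Se g‖ * ‖S.Se g‖ ≤ 1 := by
    rw [← CStarRing.norm_star_mul_self, ContinuousLinearMap.star_eq_adjoint, S.se_isom]
    exact S.norm_Sv_le _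
  nlinarith [norm_nonneg (S.Se g)]

/-- The operator `S_μ` of a path `μ = [eₙ, …, e₁]`. -/
noncomputable def pathOp (μ : List G.E) : H →L[ℂ] H := (μ.map S.Se).prod

@[simp] lemma pathOp_nil : S.pathOp [] = 1 := rfl

lemma pathOp_cons (g : G.E) (μ : List G.E) : S.pathOp (g :: μ) = S.Se g * S.pathOp μ :=
  List.prod_cons

lemma norm_pathOp_le : ∀ μ : List G.E, ‖S.pathOp μ‖ ≤ 1
  | [] => ContinuousLinearMap.norm_id_le
  | g :: μ => by
    rw [pathOp_cons]
    exact (norm_mul_le _ _).trans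
      (mul_le_one₀ (S.norm_Se_le g) (norm_nonneg _) (norm_pathOp_le μ))

lemma pathOp_mem {A : Subalgebra ℂ (H →L[ℂ] H)} (hA : ∀ g, S.Se g ∈ A) (μ : List G.E) :
    S.pathOp μ ∈ A :=
  list_prod_mem fun _ hT ↦ by
    obtain ⟨g, -, rfl⟩ := List.mem_map.mp hT
    exact hA g

end TCKFamily

/-- The path `e_{i+t-1} ⋯ e_{i+1} e_i`, indices mod `k`. -/
def cyclePath {E : Type*} {k : ℕ} [NeZero k] (e : Fin k → E) (i : Fin k) (t : ℕ) : List E :=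
  (List.ofFn fun s : Fin t ↦ e (i + ((s : ℕ) : Fin k))).reverse

section CyclePath

variable {E : Type*} {k : ℕ} [NeZero k] (e : Fin k → E)

@[simp] lemma length_cyclePath (i : Fin k) (t : ℕ) : (cyclePath e i t).length = t := by
  simp [cyclePath]

lemma cyclePath_succ (i : Fin k) (t : ℕ) :
    cyclePath e i (t + 1) = e (i + (t : Fin k)) :: cyclePath e i t := by
  rw [cyclePath, cyclePath, List.ofFn_succ', List.concat_eq_append, List.reverse_append]
  rfl

lemma cyclePath_zero_self : cyclePath e 0 k = (List.ofFn e).reverse := by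
  simp [cyclePath]

lemma periodic_of_cyclePath_eq {j : Fin k} (h : cyclePath e 0 k = cyclePath e j k) :
    Function.Periodic e j := by
  intro t
  have := congrFun (List.ofFn_inj.mp (List.reverse_inj.mp h)) t
  simpa [add_comm] using this.symm

end CyclePath

/-- The edge operators of `S` act on `ξ` as those of the cycle-type family `S_{w,λ}`. -/
structure IsCycleTypeAction {G : DirectedGraph} {H : Type} [NormedAddCommGroup H]
    [InnerProductSpace ℂ H] [CompleteSpace H] {k : ℕ} [NeZero k] (S : TCKFamily G H)
    (e : Fin k → G.E) (lam : ℂ) (ξ : Fin k ⊕ BranchIdx G e → H) : Prop where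
  cycle : ∀ j : Fin k, S.Se (e j) (ξ (Sum.inl j)) =
    (if (j : ℕ) + 1 = k then lam else 1) • ξ (Sum.inl (j + 1))
  branch : ∀ (g : G.E) (j : Fin k), G.src g = G.src (e j) → g ≠ e j →
    ∀ q : BranchIdx G e, q.1 = (j, g, ([] : List G.E)) → S.Se g (ξ (Sum.inl j)) = ξ (Sum.inr q)
  cycle_eq_zero : ∀ (g : G.E) (j : Fin k), G.src g ≠ G.src (e j) → S.Se g (ξ (Sum.inl j)) = 0
  extend : ∀ (g : G.E) (q q' : BranchIdx G e), G.RngIs (G.rng q.1.2.1) q.1.2.2 (G.src g) →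
    q'.1 = (q.1.1, q.1.2.1, g :: q.1.2.2) → S.Se g (ξ (Sum.inr q)) = ξ (Sum.inr q')
  branch_eq_zero : ∀ (g : G.E) (q : BranchIdx G e),
    ¬ G.RngIs (G.rng q.1.2.1) q.1.2.2 (G.src g) → S.Se g (ξ (Sum.inr q)) = 0

/-- The operator `λ̄ S_w` of the cycle `w = e_{k-1} ⋯ e_0`. -/
noncomputable def cycleOp {G : DirectedGraph} {H : Type} [NormedAddCommGroup H]
    [InnerProductSpace ℂ H] [CompleteSpace H] {k : ℕ} (S : TCKFamily G H) (e : Fin k → G.E)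
    (lam : ℂ) : H →L[ℂ] H :=
  (starRingEnd ℂ) lam • S.pathOp (List.ofFn e).reverse

lemma norm_cycleOp_le {G : DirectedGraph} {H : Type} [NormedAddCommGroup H]
    [InnerProductSpace ℂ H] [CompleteSpace H] {k : ℕ} {S : TCKFamily G H} {e : Fin k → G.E}
    {lam : ℂ} (hlam : ‖lam‖ = 1) : ‖cycleOp S e lam‖ ≤ 1 := by
  rw [cycleOp, norm_smul, RCLike.norm_conj, hlam, one_mul]
  exact S.norm_pathOp_le _

def basisDepth {G : DirectedGraph} {k : ℕ} (e : Fin k → G.E) : Fin k ⊕ BranchIdx G e → ℕ :=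
  Sum.elim (fun _ ↦ 0) (fun q ↦ q.path.length + 1)

namespace IsCycleTypeAction

variable {G : DirectedGraph} {H : Type} [NormedAddCommGroup H] [InnerProductSpace ℂ H]
  [CompleteSpace H] {k : ℕ} [NeZero k] {S : TCKFamily G H} {e : Fin k → G.E} {lam : ℂ}
  {ξ : Fin k ⊕ BranchIdx G e → H} (hS : IsCycleTypeAction S e lam ξ)
include hS

lemma Se_apply_inr (g : G.E) (q : BranchIdx G e) :
    S.Se g (ξ (Sum.inr q)) = 0 ∨
      ∃ q' : BranchIdx G e, S.Se g (ξ (Sum.inr q)) = ξ (Sum.inr q') ∧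
        q'.path.length = q.path.length + 1 := by
  by_cases hg : G.RngIs (G.rng q.1.2.1) q.path (G.src g)
  · exact .inr ⟨q.extend g hg, hS.extend g q _ hg rfl, rfl⟩
  · exact .inl (hS.branch_eq_zero g q hg)

lemma Se_apply_inl (g : G.E) (j : Fin k) :
    S.Se g (ξ (Sum.inl j)) = 0 ∨
      (g = e j ∧ S.Se g (ξ (Sum.inl j)) =
        (if (j : ℕ) + 1 = k then lam else 1) • ξ (Sum.inl (j + 1))) ∨
      ∃ q : BranchIdx G e, S.Se g (ξ (Sum.inl j)) = ξ (Sum.inr q) := by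
  by_cases hsrc : G.src g = G.src (e j)
  · by_cases hg : g = e j
    · exact .inr (.inl ⟨hg, hg ▸ hS.cycle j⟩)
    · exact .inr (.inr ⟨⟨(j, g, []), hsrc, hg, List.isChain_nil, by simp [DirectedGraph.SrcIs]⟩,
        hS.branch g j hsrc hg _ rfl⟩)
  · exact .inl (hS.cycle_eq_zero g j hsrc)

lemma pathOp_apply_inr (q : BranchIdx G e) :
    ∀ μ : List G.E, S.pathOp μ (ξ (Sum.inr q)) = 0 ∨
      ∃ q' : BranchIdx G e, S.pathOp μ (ξ (Sum.inr q)) = ξ (Sum.inr q') ∧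
        q'.path.length = q.path.length + μ.length
  | [] => .inr ⟨q, by simp, rfl⟩
  | g :: μ => by
    rw [S.pathOp_cons, mul_apply_eq_comp]
    obtain h0 | ⟨q', hq', hlen⟩ := pathOp_apply_inr q μ
    · simp [h0]
    obtain h0 | ⟨q'', hq'', hlen'⟩ := hS.Se_apply_inr g q'
    · simp [hq', h0]
    · exact .inr ⟨q'', by rw [hq', hq''], by simp [hlen', hlen]; omega⟩

lemma pathOp_apply_inl (j : Fin k) :
    ∀ μ : List G.E, S.pathOp μ (ξ (Sum.inl j)) = 0 ∨
      (∃ (c : ℂ) (q : BranchIdx G e), S.pathOp μ (ξ (Sum.inl j)) = c • ξ (Sum.inr q)) ∨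
      (μ = cyclePath e j μ.length ∧
        ∃ c : ℂ, S.pathOp μ (ξ (Sum.inl j)) = c • ξ (Sum.inl (j + (μ.length : Fin k))))
  | [] => .inr (.inr ⟨rfl, 1, by simp⟩)
  | g :: μ => by
    rw [S.pathOp_cons, mul_apply_eq_comp]
    obtain h0 | ⟨c, q, hv⟩ | ⟨hμ, c, hv⟩ := pathOp_apply_inl j μ
    · simp [h0]
    · rw [hv, map_smul]
      obtain h0 | ⟨q', hq', -⟩ := hS.Se_apply_inr g q
      · simp [h0]
      · exact .inr (.inl ⟨c, q', by rw [hq']⟩)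
    · rw [hv, map_smul]
      obtain h0 | ⟨hg, hg'⟩ | ⟨q, hq⟩ := hS.Se_apply_inl g (j + (μ.length : Fin k))
      · simp [h0]
      · have hidx : j + ((g :: μ).length : Fin k) = j + (μ.length : Fin k) + 1 := by
          rw [List.length_cons]
          push_cast
          ring
        refine .inr (.inr ⟨?_, _, by rw [hidx, hg', smul_smul]⟩)
        rw [List.length_cons, cyclePath_succ, ← hμ, hg]
      · exact .inr (.inl ⟨c, q, by rw [hq]⟩)

lemma pathOp_cyclePath_apply_of_lt (i : Fin k) :
    ∀ t : ℕ, (i : ℕ) + t < k →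
      S.pathOp (cyclePath e i t) (ξ (Sum.inl i)) = ξ (Sum.inl (i + (t : Fin k)))
  | 0, _ => by simp [cyclePath]
  | t + 1, ht => by
    rw [cyclePath_succ, S.pathOp_cons, mul_apply_eq_comp,
      pathOp_cyclePath_apply_of_lt i t (by omega), hS.cycle, Fin.val_add_natCast_of_lt (by omega),
      if_neg (by omega), one_smul]
    push_cast
    rw [add_assoc]

lemma pathOp_cyclePath_apply_zero (j : Fin k) :
    S.pathOp (cyclePath e 0 j) (ξ (Sum.inl 0)) = ξ (Sum.inl j) := by
  simpa using hS.pathOp_cyclePath_apply_of_lt 0 j (by simp)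

lemma pathOp_cyclePath_apply_wrap (i : Fin k) :
    S.pathOp (cyclePath e i (k - i)) (ξ (Sum.inl i)) = lam • ξ (Sum.inl 0) := by
  obtain ⟨t, ht⟩ : ∃ t, k - i = t + 1 := ⟨k - i - 1, by omega⟩
  have hwrap : i + (t : Fin k) + 1 = 0 := by
    have h := congrArg (fun n : ℕ ↦ (n : Fin k)) (show (i : ℕ) + t + 1 = k by omega)
    simpa only [Nat.cast_add, Nat.cast_one, Fin.cast_val_eq_self, Fin.natCast_self] using h
  rw [ht, cyclePath_succ, S.pathOp_cons, mul_apply_eq_comp,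
    hS.pathOp_cyclePath_apply_of_lt i t (by omega), hS.cycle,
    Fin.val_add_natCast_of_lt (by omega), if_pos (by omega), hwrap]

lemma inner_apply_cyclePath_wrap (hlam : ‖lam‖ = 1) (hON : Orthonormal ℂ ξ) (i : Fin k)
    (x : H) :
    ⟪ξ (Sum.inl 0), ((starRingEnd ℂ) lam • S.pathOp (cyclePath e i (k - i))) x⟫_ℂ =
      ⟪ξ (Sum.inl i), x⟫_ℂ := by
  set B := (starRingEnd ℂ) lam • S.pathOp (cyclePath e i (k - i))
  have hB : ‖B‖ ≤ 1 := by
    rw [norm_smul, RCLike.norm_conj, hlam, one_mul]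
    exact S.norm_pathOp_le _
  have hBi : B (ξ (Sum.inl i)) = ξ (Sum.inl 0) := by
    rw [smul_apply, hS.pathOp_cyclePath_apply_wrap, smul_smul, Complex.conj_mul', hlam]
    simp
  rw [← hBi]
  exact inner_map_map_of_norm_map_eq hB (by rw [hBi, hON.1, hON.1]) x

lemma cycleOp_apply_zero (hlam : ‖lam‖ = 1) :
    cycleOp S e lam (ξ (Sum.inl 0)) = ξ (Sum.inl 0) := by
  have h := hS.pathOp_cyclePath_apply_wrap 0
  rw [Fin.val_zero, Nat.sub_zero, cyclePath_zero_self] at h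
  rw [cycleOp, smul_apply, h, smul_smul, Complex.conj_mul', hlam]
  simp

/-- Following the whole cycle from `ξ_j` back to a cycle vector would make `j` a period of `e`;
primitivity rules this out for `j ≠ 0`. -/
lemma cycleOp_apply_of_ne
    (hprim : ∀ p : ℕ, 0 < p → p < k → p ∣ k → ¬ Function.Periodic e (Fin.ofNat k p))
    (b : Fin k ⊕ BranchIdx G e) (hb : b ∈ ({Sum.inl 0}ᶜ : Set _)) :
    cycleOp S e lam (ξ b) = 0 ∨ ∃ (c : ℂ) (b' : Fin k ⊕ BranchIdx G e),
      b' ∈ ({Sum.inl 0}ᶜ : Set _) ∧ basisDepth e b < basisDepth e b' ∧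
        cycleOp S e lam (ξ b) = c • ξ b' := by
  rw [cycleOp, smul_apply]
  cases b with
  | inl j =>
    obtain h0 | ⟨c, q, hv⟩ | ⟨hμ, -⟩ := hS.pathOp_apply_inl j (List.ofFn e).reverse
    · simp [h0]
    · exact .inr ⟨_ * c, Sum.inr q, by simp, by simp [basisDepth], by rw [hv, smul_smul]⟩
    · rw [← cyclePath_zero_self, length_cyclePath] at hμ
      exact absurd (Fin.eq_zero_of_periodic hprim (periodic_of_cyclePath_eq e hμ))
        (by simpa using hb)
  | inr q =>
    obtain h0 | ⟨q', hv, hlen⟩ := hS.pathOp_apply_inr q (List.ofFn e).reverse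
    · simp [h0]
    · refine .inr ⟨_, Sum.inr q', by simp, ?_, by rw [hv]⟩
      simp only [basisDepth, Sum.elim_inr, hlen, List.length_reverse, List.length_ofFn]
      have := NeZero.pos k
      omega

theorem tendsto_inner_cycleOp_pow (hlam : ‖lam‖ = 1)
    (hprim : ∀ p : ℕ, 0 < p → p < k → p ∣ k → ¬ Function.Periodic e (Fin.ofNat k p))
    (hON : Orthonormal ℂ ξ) (htot : (Submodule.span ℂ (Set.range ξ)).topologicalClosure = ⊤)
    (x y : H) :
    Tendsto (fun m : ℕ ↦ ⟪y, (cycleOp S e lam ^ m) x⟫_ℂ) atTop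
      (𝓝 (⟪ξ (Sum.inl 0), x⟫_ℂ * ⟪y, ξ (Sum.inl 0)⟫_ℂ)) := by
  have hbound (m : ℕ) : ‖(innerSL ℂ y).comp (cycleOp S e lam ^ m)‖ ≤ ‖y‖ * 1 :=
    ((innerSL ℂ y).opNorm_comp_le _).trans <| by
      rw [innerSL_apply_norm]
      gcongr
      exact ContinuousLinearMap.norm_pow_le_one (norm_cycleOp_le hlam) m
  have hbasis (b : Fin k ⊕ BranchIdx G e) :
      Tendsto (fun m ↦ (innerSL ℂ y).comp (cycleOp S e lam ^ m) (ξ b)) atTop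
        (𝓝 ((innerSL ℂ y).comp ((innerSL ℂ (ξ (Sum.inl 0))).smulRight (ξ (Sum.inl 0))) (ξ b))) := by
    simp only [ContinuousLinearMap.comp_apply, innerSL_apply_apply,
      ContinuousLinearMap.smulRight_apply, inner_smul_right]
    by_cases hb : b = Sum.inl 0
    · subst hb
      have hfix (m : ℕ) : (cycleOp S e lam ^ m) (ξ (Sum.inl 0)) = ξ (Sum.inl 0) := by
        rw [pow_apply_eq_iterate]
        exact Function.IsFixedPt.iterate (hS.cycleOp_apply_zero hlam) m
      simp [hfix, hON.1]
    · rw [hON.2 (Ne.symm hb), zero_mul]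
      exact tendsto_inner_pow_apply_of_wandering (norm_cycleOp_le hlam) hON
        (hS.cycleOp_apply_of_ne hprim) (P := {Sum.inl 0}ᶜ) hb y
  simpa only [ContinuousLinearMap.comp_apply, innerSL_apply_apply,
    ContinuousLinearMap.smulRight_apply, inner_smul_right] using
    tendsto_apply_of_tendsto_on_total hbound _ htot hbasis x

end IsCycleTypeAction

set_option synthInstance.maxHeartbeats 1000000 in
theorem stmt19_general (G : DirectedGraph) {H : Type} [NormedAddCommGroup H]
    [InnerProductSpace ℂ H] [CompleteSpace H]
    (k : ℕ) [NeZero k] (e : Fin k → G.E)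
    (hprim : ∀ p : ℕ, 0 < p → p < k → p ∣ k →
      ¬ ∀ j : Fin k, e (j + Fin.ofNat k p) = e j)
    (lam : ℂ) (hlam : ‖lam‖ = 1)
    (ξ : Fin k ⊕ BranchIdx G e → H) (hON : Orthonormal ℂ ξ)
    (htot : (Submodule.span ℂ (Set.range ξ)).topologicalClosure = ⊤)
    (S : TCKFamily G H)
    (hSe_cycle : ∀ j : Fin k, S.Se (e j) (ξ (Sum.inl j)) =
      (if (j : ℕ) + 1 = k then lam else 1) • ξ (Sum.inl (j + 1)))
    (hSe_branch : ∀ (g : G.E) (j : Fin k), G.src g = G.src (e j) → g ≠ e j →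
      ∀ q : BranchIdx G e, q.1 = (j, g, ([] : List G.E)) →
        S.Se g (ξ (Sum.inl j)) = ξ (Sum.inr q))
    (hSe_cycle_zero : ∀ (g : G.E) (j : Fin k), G.src g ≠ G.src (e j) →
      S.Se g (ξ (Sum.inl j)) = 0)
    (hSe_ext : ∀ (g : G.E) (q q' : BranchIdx G e),
      G.RngIs (G.rng q.1.2.1) q.1.2.2 (G.src g) →
      q'.1 = (q.1.1, q.1.2.1, g :: q.1.2.2) →
        S.Se g (ξ (Sum.inr q)) = ξ (Sum.inr q'))
    (hSe_branch_zero : ∀ (g : G.E) (q : BranchIdx G e),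
      ¬ G.RngIs (G.rng q.1.2.1) q.1.2.2 (G.src g) → S.Se g (ξ (Sum.inr q)) = 0) :
    (∀ x y : H, Filter.Tendsto
      (fun m : ℕ => @inner ℂ H _ y
        ((((starRingEnd ℂ) lam • ((List.ofFn e).reverse.map S.Se).prod) ^ m) x))
      Filter.atTop
      (nhds ((@inner ℂ H _ (ξ (Sum.inl 0)) x) * (@inner ℂ H _ y (ξ (Sum.inl 0)))))) ∧
    (∀ i j : Fin k,
      (ContinuousLinearMap.smulRight (innerSL ℂ (ξ (Sum.inl i))) (ξ (Sum.inl j))) ∈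
        wotClosure (((Algebra.adjoin ℂ
          ({T : H →L[ℂ] H | ∃ v, T = S.Sv v} ∪ {T : H →L[ℂ] H | ∃ g, T = S.Se g}))
            : Subalgebra ℂ (H →L[ℂ] H)) : Set (H →L[ℂ] H))) := by
  have hS : IsCycleTypeAction S e lam ξ :=
    ⟨hSe_cycle, hSe_branch, hSe_cycle_zero, hSe_ext, hSe_branch_zero⟩
  have hlim := hS.tendsto_inner_cycleOp_pow hlam hprim hON htot
  refine ⟨hlim, fun i j ↦ ?_⟩
  have hSe (g : G.E) : S.Se g ∈ Algebra.adjoin ℂ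
      ({T : H →L[ℂ] H | ∃ v, T = S.Sv v} ∪ {T : H →L[ℂ] H | ∃ g, T = S.Se g}) :=
    Algebra.subset_adjoin (.inr ⟨g, rfl⟩)
  -- `ξ_j ξ_i*` is the WOT limit of `S_{e_{j-1} ⋯ e_0} (λ̄ S_w)ᵐ λ̄ S_{e_{k-1} ⋯ e_i}`
  refine mem_wotClosure_of_tendsto (l := atTop) (fun m ↦ ?_)
    (tendsto_inner_mul_pow_mul hlim (hS.pathOp_cyclePath_apply_zero j)
      (hS.inner_apply_cyclePath_wrap hlam hON i))
  exact mul_mem (mul_mem (S.pathOp_mem hSe _)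
    (pow_mem (Subalgebra.smul_mem _ (S.pathOp_mem hSe _) _) m))
    (Subalgebra.smul_mem _ (S.pathOp_mem hSe _) _)

set_option synthInstance.maxHeartbeats 1000000 in
/-- Let `w = e_k ⋯ e_1` be a primitive cycle in `G`, `λ ∈ 𝕋`,
and let `S = S_{w,λ}` be the cycle-type atomic CK family on
`H_w = ℂᵏ ⊕ K_w`, with cycle basis `ξ (inl 1), …, ξ (inl k)` and `K_w` basis
`ξ (inr (j,f,μ))`, acting by `S_{e_j} ξ_j = ξ_{j+1}` (`j < k`),
`S_{e_k} ξ_k = λ ξ_1`, `S_f ξ_j = ξ_{(j,f,∅)}` for `f ≠ e_j` with `s(f) = s(e_j)`,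
and `S_g ξ_{(j,f,μ)} = ξ_{(j,f,gμ)}` when composable (all other actions being `0`).
Then the WOT-limit of `(λ̄ S_w)ⁿ` is the rank-one projection `ξ₁ξ₁*`, and
consequently the generated free semigroupoid algebra (the WOT closure of the
algebra generated by the family) contains all the matrix units `ξ_j ξ_i*`. -/
theorem stmt19 (G : DirectedGraph) {H : Type} [NormedAddCommGroup H]
    [InnerProductSpace ℂ H] [CompleteSpace H]
    (k : ℕ) [NeZero k] (e : Fin k → G.E)
    (hchain : ∀ j : Fin k, G.src (e (j + 1)) = G.rng (e j))
    (hprim : ∀ p : ℕ, 0 < p → p < k → p ∣ k →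
      ¬ ∀ j : Fin k, e (j + Fin.ofNat k p) = e j)
    (lam : ℂ) (hlam : ‖lam‖ = 1)
    (ξ : Fin k ⊕ BranchIdx G e → H) (hON : Orthonormal ℂ ξ)
    (htot : (Submodule.span ℂ (Set.range ξ)).topologicalClosure = ⊤)
    (S : TCKFamily G H)
    (hSe_cycle : ∀ j : Fin k, S.Se (e j) (ξ (Sum.inl j)) =
      (if (j : ℕ) + 1 = k then lam else 1) • ξ (Sum.inl (j + 1)))
    (hSe_branch : ∀ (g : G.E) (j : Fin k), G.src g = G.src (e j) → g ≠ e j →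
      ∀ q : BranchIdx G e, q.1 = (j, g, ([] : List G.E)) →
        S.Se g (ξ (Sum.inl j)) = ξ (Sum.inr q))
    (hSe_cycle_zero : ∀ (g : G.E) (j : Fin k), G.src g ≠ G.src (e j) →
      S.Se g (ξ (Sum.inl j)) = 0)
    (hSe_ext : ∀ (g : G.E) (q q' : BranchIdx G e),
      G.RngIs (G.rng q.1.2.1) q.1.2.2 (G.src g) →
      q'.1 = (q.1.1, q.1.2.1, g :: q.1.2.2) →
        S.Se g (ξ (Sum.inr q)) = ξ (Sum.inr q'))
    (hSe_branch_zero : ∀ (g : G.E) (q : BranchIdx G e),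
      ¬ G.RngIs (G.rng q.1.2.1) q.1.2.2 (G.src g) → S.Se g (ξ (Sum.inr q)) = 0)
    (hSv_cycle : ∀ (v : G.V) (j : Fin k),
      (v = G.src (e j) → S.Sv v (ξ (Sum.inl j)) = ξ (Sum.inl j)) ∧
      (v ≠ G.src (e j) → S.Sv v (ξ (Sum.inl j)) = 0))
    (hSv_branch : ∀ (v : G.V) (q : BranchIdx G e),
      (G.RngIs (G.rng q.1.2.1) q.1.2.2 v → S.Sv v (ξ (Sum.inr q)) = ξ (Sum.inr q)) ∧
      (¬ G.RngIs (G.rng q.1.2.1) q.1.2.2 v → S.Sv v (ξ (Sum.inr q)) = 0)) :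
    (∀ x y : H, Filter.Tendsto
      (fun m : ℕ => @inner ℂ H _ y
        ((((starRingEnd ℂ) lam • ((List.ofFn e).reverse.map S.Se).prod) ^ m) x))
      Filter.atTop
      (nhds ((@inner ℂ H _ (ξ (Sum.inl 0)) x) * (@inner ℂ H _ y (ξ (Sum.inl 0)))))) ∧
    (∀ i j : Fin k,
      (ContinuousLinearMap.smulRight (innerSL ℂ (ξ (Sum.inl i))) (ξ (Sum.inl j))) ∈
        wotClosure (((Algebra.adjoin ℂ
          ({T : H →L[ℂ] H | ∃ v, T = S.Sv v} ∪ {T : H →L[ℂ] H | ∃ g, T = S.Se g}))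
            : Subalgebra ℂ (H →L[ℂ] H)) : Set (H →L[ℂ] H))) :=
  stmt19_general G k e hprim lam hlam ξ hON htot S hSe_cycle hSe_branch hSe_cycle_zero hSe_ext
    hSe_branch_zero
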